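/- arXiv:2509.22597 — 3 statements merged into one kernel-verified Lean document; each statement's English description precedes it below -/
import Mathlib

section
/- Let X_1,...,X_N be i.i.d. random points in a probability space with values in a set Λ, let B ⊆ A ⊆ Λ be measurable with P(X_1 ∈ A) = p > 0 and P(X_1 ∈ B) = p̆. Then the expectation of the ratio (number of X_j in B)/(number of X_j in A), with the convention that the ratio is 0 when the denominator is 0, equals (p̆/p)·(1 − (1−p)^N). -/
/-!
Write `S_A = ∑ i, 1_A(X_i)` and `h_j = (1 + ∑_{i ≠ j} 1_A(X_i))⁻¹`. For `s ⊆ A` one has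
`1_s(X_j) / S_A = 1_s(X_j) h_j`, and `h_j`, a function of the other `X_i`, is independent
of `X_j`, so `E[1_s(X_j) / S_A] = P(X_j ∈ s) E[h_j]`. Summing over `j` with `s = B` and with `s = A` gives
`E[S_B / S_A] = (p̆ / p) E[S_A / S_A]`, and `S_A / S_A` is the indicator of `{S_A ≠ 0}`, whose
probability is `1 - (1 - p)^N`.
-/

open MeasureTheory ProbabilityTheory Finset

section Pointwise

variable {Λ ι : Type*} [Fintype ι]

lemma indicator_div_sum_indicator_of_subset [DecidableEq ι] {A s : Set Λ} (hsA : s ⊆ A)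
    (x : ι → Λ) (j : ι) :
    s.indicator (fun _ => (1 : ℝ)) (x j) / ∑ i, A.indicator (fun _ => (1 : ℝ)) (x i)
      = s.indicator (fun _ => 1) (x j)
        * (1 + ∑ i ∈ univ.erase j, A.indicator (fun _ => (1 : ℝ)) (x i))⁻¹ := by
  by_cases hj : x j ∈ s
  · rw [← add_sum_erase _ _ (mem_univ j), Set.indicator_of_mem hj,
      Set.indicator_of_mem (hsA hj), one_div, one_mul]
  · simp [Set.indicator_of_notMem hj]

lemma sum_indicator_div_self (A : Set Λ) (x : ι → Λ) :
    (∑ i, A.indicator (fun _ => (1 : ℝ)) (x i)) / ∑ i, A.indicator (fun _ => (1 : ℝ)) (x i)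
      = 1 - {x | ∀ i, x i ∉ A}.indicator (fun _ => 1) x := by
  have hzero : ∑ i, A.indicator (fun _ => (1 : ℝ)) (x i) = 0 ↔ ∀ i, x i ∉ A := by
    simp [sum_eq_zero_iff_of_nonneg, Set.indicator_nonneg, Set.indicator_apply_eq_zero]
  by_cases hx : ∀ i, x i ∉ A
  · simp [hx]
  · rw [div_self (mt hzero.1 hx), Set.indicator_of_notMem (show x ∉ {x | ∀ i, x i ∉ A} from hx),
      sub_zero]

end Pointwise

section Integrals

variable {Ω Λ ι : Type*} [MeasurableSpace Ω] [MeasurableSpace Λ] {P : Measure Ω}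
  {X : ι → Ω → Λ}

lemma ProbabilityTheory.iIndepFun.integral_indicator_mul_eq_of_notMem (hX : iIndepFun X P)
    (hXm : ∀ i, Measurable (X i)) {s : Set Λ} (hs : MeasurableSet s) {j : ι} {T : Finset ι}
    (hjT : j ∉ T) {g : (T → Λ) → ℝ} (hg : Measurable g) :
    ∫ ω, s.indicator (fun _ => (1 : ℝ)) (X j ω) * g (fun i => X i ω) ∂P
      = P.real (X j ⁻¹' s) * ∫ ω, g (fun i => X i ω) ∂P := by
  classical
  have hsingle : Measurable fun y : ({j} : Finset ι) → Λ =>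
      s.indicator (fun _ => (1 : ℝ)) (y ⟨j, mem_singleton_self j⟩) :=
    (measurable_const.indicator hs).comp (measurable_pi_apply _)
  have hind : IndepFun (fun ω => s.indicator (fun _ => (1 : ℝ)) (X j ω))
      (fun ω => g (fun i => X i ω)) P :=
    (hX.indepFun_finset {j} T (disjoint_singleton_left.2 hjT) hXm).comp hsingle hg
  rw [← integral_indicator_one ((hXm j) hs)]
  exact hind.integral_mul_eq_mul_integral
    ((measurable_const.indicator hs).comp (hXm j)).aestronglyMeasurable
    (hg.comp (measurable_pi_lambda _ fun i => hXm i)).aestronglyMeasurable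

variable [Fintype ι] {A : Set Λ}

lemma integral_sum_indicator_div_self (hX : iIndepFun X P) (hXm : ∀ i, Measurable (X i))
    (hA : MeasurableSet A) :
    ∫ ω, (∑ j, A.indicator (fun _ => (1 : ℝ)) (X j ω))
        / ∑ j, A.indicator (fun _ => (1 : ℝ)) (X j ω) ∂P
      = 1 - ∏ j, (1 - P.real (X j ⁻¹' A)) := by
  have := hX.isProbabilityMeasure
  have hnone : (fun ω => {x : ι → Λ | ∀ i, x i ∉ A}.indicator (fun _ => (1 : ℝ)) fun i => X i ω)
      = (⋂ i, X i ⁻¹' Aᶜ).indicator 1 := by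
    ext ω
    by_cases h : ∀ i, X i ω ∉ A <;> simp [h]
  have hmeas : MeasurableSet (⋂ i, X i ⁻¹' Aᶜ) := .iInter fun i => (hXm i) hA.compl
  have hprob : P.real (⋂ i, X i ⁻¹' Aᶜ) = ∏ j, (1 - P.real (X j ⁻¹' A)) := by
    rw [measureReal_def, hX.meas_iInter fun i => ⟨Aᶜ, hA.compl, rfl⟩, ENNReal.toReal_prod]
    exact prod_congr rfl fun j _ => probReal_compl_eq_one_sub ((hXm j) hA)
  simp_rw [sum_indicator_div_self A (fun i => X i _)]
  rw [integral_sub (integrable_const 1) (hnone ▸ (integrable_const 1).indicator hmeas), hnone,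
    integral_const, integral_indicator_one hmeas, hprob]
  simp

variable [DecidableEq ι]

lemma integrable_indicator_mul_inv_one_add_sum_indicator [IsFiniteMeasure P]
    (hXm : ∀ i, Measurable (X i)) {s : Set Λ} (hs : MeasurableSet s) (hA : MeasurableSet A)
    (j : ι) :
    Integrable (fun ω => s.indicator (fun _ => (1 : ℝ)) (X j ω)
      * (1 + ∑ i ∈ univ.erase j, A.indicator (fun _ => (1 : ℝ)) (X i ω))⁻¹) P := by
  refine .of_bound (by fun_prop (disch := assumption)) 1 (ae_of_all _ fun ω => ?_)
  have hc : 0 ≤ ∑ i ∈ univ.erase j, A.indicator (fun _ => (1 : ℝ)) (X i ω) :=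
    sum_nonneg fun i _ => Set.indicator_nonneg (fun _ _ => zero_le_one) _
  rw [norm_mul, norm_inv, Real.norm_of_nonneg (by positivity : (0 : ℝ) ≤ 1 + _)]
  exact mul_le_one₀ (by by_cases h : X j ω ∈ s <;> simp [h]) (by positivity)
    (inv_le_one_of_one_le₀ (by linarith))

lemma integral_sum_indicator_div_sum_indicator (hX : iIndepFun X P)
    (hXm : ∀ i, Measurable (X i)) {s : Set Λ} (hs : MeasurableSet s) (hA : MeasurableSet A)
    (hsA : s ⊆ A) :
    ∫ ω, (∑ j, s.indicator (fun _ => (1 : ℝ)) (X j ω))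
        / ∑ j, A.indicator (fun _ => (1 : ℝ)) (X j ω) ∂P
      = ∑ j, P.real (X j ⁻¹' s)
          * ∫ ω, (1 + ∑ i ∈ univ.erase j, A.indicator (fun _ => (1 : ℝ)) (X i ω))⁻¹ ∂P := by
  have := hX.isProbabilityMeasure
  have hsplit : ∀ ω, (∑ j, s.indicator (fun _ => (1 : ℝ)) (X j ω))
      / ∑ j, A.indicator (fun _ => (1 : ℝ)) (X j ω) = ∑ j, s.indicator (fun _ => 1) (X j ω)
        * (1 + ∑ i ∈ univ.erase j, A.indicator (fun _ => (1 : ℝ)) (X i ω))⁻¹ := fun ω => by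
    rw [sum_div]
    exact sum_congr rfl fun j _ => indicator_div_sum_indicator_of_subset hsA (X · ω) j
  simp_rw [hsplit]
  rw [integral_finsetSum _ fun j _ =>
    integrable_indicator_mul_inv_one_add_sum_indicator hXm hs hA j]
  refine sum_congr rfl fun j _ => ?_
  have hg : Measurable fun y : ↥(univ.erase j) → Λ =>
      (1 + ∑ i, A.indicator (fun _ => (1 : ℝ)) (y i))⁻¹ := by
    fun_prop (disch := exact hA)
  have hrest : ∀ ω, ∑ i : ↥(univ.erase j), A.indicator (fun _ => (1 : ℝ)) (X i ω)
      = ∑ i ∈ univ.erase j, A.indicator (fun _ => (1 : ℝ)) (X i ω) := fun ω =>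
    sum_coe_sort (univ.erase j) fun i => A.indicator (fun _ => (1 : ℝ)) (X i ω)
  simpa only [hrest] using
    hX.integral_indicator_mul_eq_of_notMem hXm hs (notMem_erase j univ) hg

end Integrals

theorem stmt_0_general {Ω Λ : Type*} [MeasurableSpace Ω] [MeasurableSpace Λ]
    (P : Measure Ω) [IsProbabilityMeasure P]
    (N : ℕ) (hN : 0 < N)
    (X : Fin N → Ω → Λ) (hXmeas : ∀ j, Measurable (X j))
    (hindep : iIndepFun X P)
    (hident : ∀ j, Measure.map (X j) P = Measure.map (X ⟨0, hN⟩) P)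
    (A B : Set Λ) (hA : MeasurableSet A) (hB : MeasurableSet B) (hBA : B ⊆ A)
    (p pb : ℝ)
    (hp : ((Measure.map (X ⟨0, hN⟩) P) A).toReal = p)
    (hpb : ((Measure.map (X ⟨0, hN⟩) P) B).toReal = pb) :
    ∫ ω, (∑ j, Set.indicator B (fun _ => (1 : ℝ)) (X j ω)) /
          (∑ j, Set.indicator A (fun _ => (1 : ℝ)) (X j ω)) ∂P
      = (pb / p) * (1 - (1 - p) ^ N) := by
  have hlaw : ∀ j {s : Set Λ}, MeasurableSet s →
      P.real (X j ⁻¹' s) = (Measure.map (X ⟨0, hN⟩) P s).toReal := fun j s hs => by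
    rw [← hident j, Measure.map_apply (hXmeas j) hs, measureReal_def]
  have hpA : ∀ j, P.real (X j ⁻¹' A) = p := fun j => (hlaw j hA).trans hp
  have hpB : ∀ j, P.real (X j ⁻¹' B) = pb := fun j => (hlaw j hB).trans hpb
  have hpb_of_p : p = 0 → pb = 0 := fun hp0 => by
    rw [← hpA ⟨0, hN⟩] at hp0
    rw [← hpB ⟨0, hN⟩]
    exact le_antisymm (hp0 ▸ measureReal_mono (Set.preimage_mono hBA)) measureReal_nonneg
  have hBdiv := integral_sum_indicator_div_sum_indicator hindep hXmeas hB hA hBA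
  have hAdiv := integral_sum_indicator_div_sum_indicator hindep hXmeas hA hA subset_rfl
  have hAself := integral_sum_indicator_div_self hindep hXmeas hA
  simp only [hpA, hpB, ← mul_sum] at hBdiv hAdiv
  simp only [hpA, prod_const, card_univ, Fintype.card_fin] at hAself
  rw [hBdiv, ← hAself, hAdiv, ← mul_assoc, div_mul_cancel_of_imp hpb_of_p]

theorem stmt_0 {Ω Λ : Type*} [MeasurableSpace Ω] [MeasurableSpace Λ]
    (P : Measure Ω) [IsProbabilityMeasure P]
    (N : ℕ) (hN : 0 < N)
    (X : Fin N → Ω → Λ) (hXmeas : ∀ j, Measurable (X j))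
    (hindep : iIndepFun X P)
    (hident : ∀ j, Measure.map (X j) P = Measure.map (X ⟨0, hN⟩) P)
    (A B : Set Λ) (hA : MeasurableSet A) (hB : MeasurableSet B) (hBA : B ⊆ A)
    (p pb : ℝ)
    (hp : ((Measure.map (X ⟨0, hN⟩) P) A).toReal = p)
    (hpb : ((Measure.map (X ⟨0, hN⟩) P) B).toReal = pb)
    (hppos : 0 < p) :
    ∫ ω, (∑ j, Set.indicator B (fun _ => (1 : ℝ)) (X j ω)) /
          (∑ j, Set.indicator A (fun _ => (1 : ℝ)) (X j ω)) ∂P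
      = (pb / p) * (1 - (1 - p) ^ N) :=
  stmt_0_general P N hN X hXmeas hindep hident A B hA hB hBA p pb hp hpb
end

section
/- For any integer N ≥ 2 and real p with 0 < p ≤ 1, ∑_{j=2}^N (1/(j(j−1))) · C(N−2, j−2) · p^{j−2} (1−p)^{N−j} = (1/(N(N−1)p²)) · (1 − (1−p)^{N−1}(1 + (N−1)p)). -/
/-!
Since `C(N-2, j-2) / (j(j-1)) = C(N, j) / (N(N-1))`, the sum is `1 / (N(N-1)p²)` times the
binomial expansion of `(p + (1-p))^N = 1` with its `j = 0` and `j = 1` terms removed.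
-/

open Finset

theorem Nat.add_two_choose_add_two_mul (n k : ℕ) :
    (n + 2).choose (k + 2) * ((k + 2) * (k + 1)) = (n + 2) * (n + 1) * n.choose k := by
  rw [← mul_assoc, ← Nat.add_one_mul_choose_eq, mul_assoc, ← Nat.add_one_mul_choose_eq, mul_assoc]

theorem sum_Icc_two_eq_sum_range {M : Type*} [AddCommMonoid M] (f : ℕ → M) (m : ℕ) :
    ∑ j ∈ Icc 2 (m + 2), f j = ∑ i ∈ range (m + 1), f (i + 2) := by
  rw [range_eq_Ico, sum_Ico_add', zero_add, add_right_comm, Ico_add_one_right_eq_Icc]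

theorem add_pow_sub_first_two_terms {R : Type*} [CommRing R] (x y : R) (m : ℕ) :
    ∑ i ∈ range (m + 1), x ^ (i + 2) * y ^ (m - i) * ((m + 2).choose (i + 2) : R)
      = (x + y) ^ (m + 2) - y ^ (m + 2) - (m + 2) * x * y ^ (m + 1) := by
  rw [add_pow, sum_range_succ' _ (m + 2), sum_range_succ' _ (m + 1)]
  simp only [Nat.add_sub_add_right, Nat.choose_zero_right, Nat.choose_one_right, zero_add,
    pow_zero, pow_one, Nat.cast_one, Nat.cast_add, Nat.cast_ofNat, Nat.sub_zero, Nat.add_succ_sub_one]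
  ring

theorem one_div_mul_cast_choose {K : Type*} [Field K] [CharZero K] (m i : ℕ) :
    1 / (((i : K) + 2) * (i + 1)) * m.choose i
      = 1 / (((m : K) + 2) * (m + 1)) * (m + 2).choose (i + 2) := by
  have h : ((m + 2).choose (i + 2) : K) * ((i + 2) * (i + 1)) = (m + 2) * (m + 1) * m.choose i := by
    exact_mod_cast Nat.add_two_choose_add_two_mul m i
  have hi : ((i : K) + 2) * (i + 1) ≠ 0 := by norm_cast
  have hm : ((m : K) + 2) * (m + 1) ≠ 0 := by norm_cast
  rw [div_mul_eq_mul_div, div_mul_eq_mul_div, div_eq_div_iff hi hm]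
  linear_combination -h

theorem stmt_3_general (N : ℕ) (hN : 2 ≤ N) (p : ℝ) (hp0 : 0 < p) :
    ∑ j ∈ Finset.Icc 2 N,
      (1 / ((j : ℝ) * ((j : ℝ) - 1))) * (Nat.choose (N - 2) (j - 2)) * p ^ (j - 2) * (1 - p) ^ (N - j)
      = (1 / ((N : ℝ) * ((N : ℝ) - 1) * p ^ 2)) *
        (1 - (1 - p) ^ (N - 1) * (1 + ((N : ℝ) - 1) * p)) := by
  obtain ⟨m, rfl⟩ : ∃ m, N = m + 2 := ⟨N - 2, by omega⟩
  have hterm : ∀ i ∈ range (m + 1),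
      1 / (((i + 2 : ℕ) : ℝ) * ((i + 2 : ℕ) - 1)) * ((m + 2 - 2).choose (i + 2 - 2) : ℝ)
        * p ^ (i + 2 - 2) * (1 - p) ^ (m + 2 - (i + 2))
      = 1 / ((m + 2) * (m + 1) * p ^ 2) *
        (p ^ (i + 2) * (1 - p) ^ (m - i) * ((m + 2).choose (i + 2) : ℝ)) := by
    intro i _
    simp only [Nat.add_sub_cancel, Nat.add_sub_add_right, Nat.cast_add, Nat.cast_ofNat,
      add_sub_assoc, show (2 : ℝ) - 1 = 1 by norm_num, one_div_mul_cast_choose]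
    field_simp
    ring
  rw [sum_Icc_two_eq_sum_range, sum_congr rfl hterm, ← mul_sum, add_pow_sub_first_two_terms,
    add_sub_cancel, one_pow]
  push_cast
  ring

theorem stmt_3 (N : ℕ) (hN : 2 ≤ N) (p : ℝ) (hp0 : 0 < p) (hp1 : p ≤ 1) :
    ∑ j ∈ Finset.Icc 2 N,
      (1 / ((j : ℝ) * ((j : ℝ) - 1))) * (Nat.choose (N - 2) (j - 2)) * p ^ (j - 2) * (1 - p) ^ (N - j)
      = (1 / ((N : ℝ) * ((N : ℝ) - 1) * p ^ 2)) *
        (1 - (1 - p) ^ (N - 1) * (1 + ((N : ℝ) - 1) * p)) :=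
  stmt_3_general N hN p hp0
end

section
/- Expectation of the empirical eSIP estimator: let I_1,...,I_M be a finite measurable partition of 𝒟, let λ_1,...,λ_N be i.i.d. with law P_p on Λ and q_1,...,q_K i.i.d. with law P_𝒟 on 𝒟, independent of the λ's. Define P̂(A) = ∑_{i=1}^M [(∑_j 1_{A∩Q^{-1}(I_i)}(λ_j))/(∑_j 1_{Q^{-1}(I_i)}(λ_j))] · (1/K)∑_k 1_{I_i}(q_k) with the convention 0/0 = 0. Then E(P̂(A)) = ∑_{i=1}^M (p̆_i/p_i)(1 − (1−p_i)^N) P_𝒟(I_i), where p_i = P_p(Q^{-1}(I_i)) and p̆_i = P_p(A ∩ Q^{-1}(I_i)), assuming p_i > 0 for all i. -/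
/-!
The summand of cell `i` is a function of the `λ`-sample times a function of the `q`-sample, so its
expectation factorises, and the `q`-factor has mean `P_𝒟(I_i)`. For the `λ`-factor, write the ratio
of counts `C_s / C_t` (with `s ⊆ t`) as `∑_j 1_s(λ_j) / C_t`. On `{λ_j ∈ s}` we have
`C_t = 1 + C'_t`, where `C'_t` counts the other sample points and is independent of `λ_j`, so
`E[1_s(λ_j) / C_t] = P(s) · E[(1 + C'_t)⁻¹]`. Hence `E[C_s / C_t] = P(s) · T` with `T` independent
of `s`, and the case `s = t`, where `C_t / C_t` is the indicator of `{C_t ≠ 0}`, gives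
`P(t) · T = 1 - (1 - P(t))^N`.
-/

open MeasureTheory ProbabilityTheory Finset

section SampleCount

variable {α ι : Type*} [Fintype ι] {s t : Set α}

noncomputable def sampleCount (s : Set α) (x : ι → α) : ℝ :=
  ∑ j, s.indicator (fun _ => (1 : ℝ)) (x j)

lemma sampleCount_nonneg (s : Set α) (x : ι → α) : 0 ≤ sampleCount s x :=
  sum_nonneg fun _ _ => Set.indicator_nonneg (fun _ _ => zero_le_one) _

lemma sampleCount_mono (hst : s ⊆ t) (x : ι → α) : sampleCount s x ≤ sampleCount t x :=
  sum_le_sum fun _ _ => Set.indicator_le_indicator_of_subset hst (fun _ => zero_le_one) _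

lemma indicator_le_sampleCount (s : Set α) (x : ι → α) (j : ι) :
    s.indicator (fun _ => (1 : ℝ)) (x j) ≤ sampleCount s x :=
  single_le_sum (f := fun k => s.indicator (fun _ => (1 : ℝ)) (x k))
    (fun _ _ => Set.indicator_nonneg (fun _ _ => zero_le_one) _) (mem_univ j)

lemma sampleCount_le_card (s : Set α) (x : ι → α) : sampleCount s x ≤ Fintype.card ι := by
  calc sampleCount s x ≤ sampleCount Set.univ x := sampleCount_mono (Set.subset_univ s) x
    _ = Fintype.card ι := by simp [sampleCount]

lemma sampleCount_eq_zero_iff {x : ι → α} : sampleCount s x = 0 ↔ ∀ j, x j ∉ s := by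
  simp [sampleCount, sum_eq_zero_iff_of_nonneg, Set.indicator_nonneg]

lemma sampleCount_eq_indicator_add [DecidableEq ι] (s : Set α) (x : ι → α) (j : ι) :
    sampleCount s x
      = s.indicator (fun _ => (1 : ℝ)) (x j) + sampleCount s (fun k : ↥(univ.erase j) => x k) := by
  rw [sampleCount, ← add_sum_erase _ _ (mem_univ j), sampleCount, ← sum_coe_sort (univ.erase j)]

lemma measurable_sampleCount [MeasurableSpace α] (hs : MeasurableSet s) :
    Measurable (sampleCount s : (ι → α) → ℝ) :=
  Finset.measurable_sum _ fun j _ => (measurable_const.indicator hs).comp (measurable_pi_apply j)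

end SampleCount

section IIDSample

variable {Ω α ι : Type*} [MeasurableSpace Ω] [MeasurableSpace α] [Fintype ι]
  {P : Measure Ω} {X : ι → Ω → α} {s t : Set α}

lemma integral_indicator_comp {Y : Ω → α} (hY : Measurable Y) (hs : MeasurableSet s) :
    ∫ ω, s.indicator (fun _ => (1 : ℝ)) (Y ω) ∂P = (P.map Y).real s := by
  rw [← integral_map hY.aemeasurable (measurable_const.indicator hs).aestronglyMeasurable,
    integral_indicator_const _ hs, smul_eq_mul, mul_one]

lemma integrable_sampleCount [IsFiniteMeasure P] (hX : ∀ j, Measurable (X j))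
    (hs : MeasurableSet s) : Integrable (fun ω => sampleCount s (X · ω)) P :=
  .of_bound ((measurable_sampleCount hs).comp (measurable_pi_iff.2 hX)).aestronglyMeasurable
    (Fintype.card ι) (ae_of_all _ fun ω => by
      rw [Real.norm_of_nonneg (sampleCount_nonneg _ _)]
      exact sampleCount_le_card s _)

lemma integrable_div_of_nonneg_of_le [IsFiniteMeasure P] {f g : Ω → ℝ} (hf : Measurable f)
    (hg : Measurable g) (hf0 : ∀ ω, 0 ≤ f ω) (hfg : ∀ ω, f ω ≤ g ω) :
    Integrable (fun ω => f ω / g ω) P :=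
  .of_bound (hf.div hg).aestronglyMeasurable 1 (ae_of_all _ fun ω => by
    rw [Real.norm_of_nonneg (div_nonneg (hf0 ω) ((hf0 ω).trans (hfg ω)))]
    exact div_le_one_of_le₀ (hfg ω) ((hf0 ω).trans (hfg ω)))

lemma integrable_sampleCount_div_sampleCount [IsFiniteMeasure P] (hX : ∀ j, Measurable (X j))
    (hs : MeasurableSet s) (ht : MeasurableSet t) (hst : s ⊆ t) :
    Integrable (fun ω => sampleCount s (X · ω) / sampleCount t (X · ω)) P :=
  integrable_div_of_nonneg_of_le ((measurable_sampleCount hs).comp (measurable_pi_iff.2 hX))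
    ((measurable_sampleCount ht).comp (measurable_pi_iff.2 hX))
    (fun _ => sampleCount_nonneg _ _) (fun _ => sampleCount_mono hst _)

lemma integral_sampleCount [IsFiniteMeasure P] (hX : ∀ j, Measurable (X j)) {μ : Measure α}
    (hlaw : ∀ j, P.map (X j) = μ) (hs : MeasurableSet s) :
    ∫ ω, sampleCount s (X · ω) ∂P = Fintype.card ι * μ.real s := by
  have hint : ∀ j, Integrable (fun ω => s.indicator (fun _ => (1 : ℝ)) (X j ω)) P := fun j =>
    .of_bound ((measurable_const.indicator hs).comp (hX j)).aestronglyMeasurable 1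
      (ae_of_all _ fun ω => by by_cases h : X j ω ∈ s <;> simp [h])
  simp only [sampleCount]
  rw [integral_finsetSum _ fun j _ => hint j]
  simp [integral_indicator_comp (hX _) hs, hlaw]

lemma integral_indicator_div_sampleCount [DecidableEq ι] (hX : ∀ j, Measurable (X j))
    (hind : iIndepFun X P) (hs : MeasurableSet s) (ht : MeasurableSet t) (hst : s ⊆ t) (j : ι) :
    ∫ ω, s.indicator (fun _ => (1 : ℝ)) (X j ω) / sampleCount t (X · ω) ∂P
      = (P.map (X j)).real s
        * ∫ ω, (1 + sampleCount t (fun k : ↥(univ.erase j) => X k ω))⁻¹ ∂P := by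
  have hsplit : ∀ ω, s.indicator (fun _ => (1 : ℝ)) (X j ω) / sampleCount t (X · ω)
      = s.indicator (fun _ => (1 : ℝ)) (X j ω)
        * (1 + sampleCount t (fun k : ↥(univ.erase j) => X k ω))⁻¹ := by
    intro ω
    rw [sampleCount_eq_indicator_add t _ j]
    by_cases h : X j ω ∈ s
    · simp [h, hst h, div_eq_mul_inv]
    · simp [h]
  have hindep : IndepFun (X j) (fun ω (k : ↥(univ.erase j)) => X k ω) P := by
    have hblocks := hind.indepFun_finset {j} (univ.erase j) (by simp) hX
    exact hblocks.comp (measurable_pi_apply (⟨j, mem_singleton_self j⟩ : ({j} : Finset ι)))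
      measurable_id
  have hf : Measurable (s.indicator fun _ => (1 : ℝ)) := measurable_const.indicator hs
  have hg : Measurable fun y : ↥(univ.erase j) → α => (1 + sampleCount t y)⁻¹ :=
    ((measurable_sampleCount ht).const_add 1).inv
  rw [integral_congr_ae (ae_of_all _ hsplit), ← integral_indicator_comp (hX j) hs]
  exact (hindep.comp hf hg).integral_fun_mul_eq_mul_integral
    (hf.comp (hX j)).aestronglyMeasurable
    (hg.comp (measurable_pi_iff.2 fun k => hX k)).aestronglyMeasurable

lemma integral_sampleCount_div_self (hX : ∀ j, Measurable (X j)) (hind : iIndepFun X P)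
    (ht : MeasurableSet t) :
    ∫ ω, sampleCount t (X · ω) / sampleCount t (X · ω) ∂P
      = 1 - ∏ j, (1 - (P.map (X j)).real t) := by
  have := hind.isProbabilityMeasure
  set E := ⋂ j, X j ⁻¹' tᶜ
  have hE : MeasurableSet E := .iInter fun j => hX j ht.compl
  have hdiv : ∀ ω, sampleCount t (X · ω) / sampleCount t (X · ω) = Eᶜ.indicator 1 ω := by
    intro ω
    by_cases h : sampleCount t (X · ω) = 0
    · simp [E, h, sampleCount_eq_zero_iff.1 h]
    · have hω : ω ∈ Eᶜ := by simpa [E] using mt sampleCount_eq_zero_iff.2 h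
      rw [div_self h, Set.indicator_of_mem hω, Pi.one_apply]
  rw [integral_congr_ae (ae_of_all _ hdiv), integral_indicator_one hE.compl,
    probReal_compl_eq_one_sub hE, measureReal_def, hind.meas_iInter fun j => ⟨tᶜ, ht.compl, rfl⟩,
    ENNReal.toReal_prod]
  congr 1
  refine prod_congr rfl fun j _ => ?_
  rw [← measureReal_def, Set.preimage_compl, probReal_compl_eq_one_sub (hX j ht),
    map_measureReal_apply (hX j) ht]

theorem integral_sampleCount_div_sampleCount (hX : ∀ j, Measurable (X j)) (hind : iIndepFun X P)
    {μ : Measure α} [IsFiniteMeasure μ] (hlaw : ∀ j, P.map (X j) = μ)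
    (hs : MeasurableSet s) (ht : MeasurableSet t) (hst : s ⊆ t) :
    ∫ ω, sampleCount s (X · ω) / sampleCount t (X · ω) ∂P
      = μ.real s / μ.real t * (1 - (1 - μ.real t) ^ Fintype.card ι) := by
  classical
  have := hind.isProbabilityMeasure
  set T := ∑ j : ι, ∫ ω, (1 + sampleCount t (fun k : ↥(univ.erase j) => X k ω))⁻¹ ∂P
  have hexpand : ∀ u, MeasurableSet u → u ⊆ t →
      ∫ ω, sampleCount u (X · ω) / sampleCount t (X · ω) ∂P = μ.real u * T := by
    intro u hu hut
    have hint : ∀ j, Integrable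
        (fun ω => u.indicator (fun _ => (1 : ℝ)) (X j ω) / sampleCount t (X · ω)) P := fun j =>
      integrable_div_of_nonneg_of_le ((measurable_const.indicator hu).comp (hX j))
        ((measurable_sampleCount ht).comp (measurable_pi_iff.2 hX))
        (fun _ => Set.indicator_nonneg (fun _ _ => zero_le_one) _)
        (fun ω => (indicator_le_sampleCount u (X · ω) j).trans (sampleCount_mono hut _))
    have hsum : ∀ ω, sampleCount u (X · ω) / sampleCount t (X · ω)
        = ∑ j, u.indicator (fun _ => (1 : ℝ)) (X j ω) / sampleCount t (X · ω) := fun ω =>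
      sum_div _ _ _
    rw [integral_congr_ae (ae_of_all _ hsum), integral_finsetSum _ fun j _ => hint j, mul_sum]
    refine sum_congr rfl fun j _ => ?_
    rw [integral_indicator_div_sampleCount hX hind hu ht hut, hlaw]
  have hT : μ.real t * T = 1 - (1 - μ.real t) ^ Fintype.card ι := by
    rw [← hexpand t ht subset_rfl, integral_sampleCount_div_self hX hind ht]
    simp [hlaw]
  rw [hexpand s hs hst]
  rcases eq_or_ne (μ.real t) 0 with h0 | h0
  · have : μ.real s = 0 := le_antisymm (h0 ▸ measureReal_mono hst) measureReal_nonneg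
    simp [this]
  · rw [← hT]
    field_simp

end IIDSample

theorem stmt_16_general {Ω Λ D : Type*} [MeasurableSpace Ω] [MeasurableSpace Λ] [MeasurableSpace D]
    (P : Measure Ω) [IsProbabilityMeasure P]
    (Pp : Measure Λ) [IsProbabilityMeasure Pp]
    (PD : Measure D)
    (Q : Λ → D) (hQ : Measurable Q)
    (A : Set Λ) (hA : MeasurableSet A)
    (M N K : ℕ) (hK : 0 < K)
    (I : Fin M → Set D) (hImeas : ∀ i, MeasurableSet (I i))
    (X : Fin N → Ω → Λ) (hXmeas : ∀ j, Measurable (X j))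
    (Y : Fin K → Ω → D) (hYmeas : ∀ k, Measurable (Y k))
    (hXindep : iIndepFun X P)
    (hXlaw : ∀ j, Measure.map (X j) P = Pp)
    (hYlaw : ∀ k, Measure.map (Y k) P = PD)
    (hXY : IndepFun (fun ω (j : Fin N) => X j ω) (fun ω (k : Fin K) => Y k ω) P)
    (p pb : Fin M → ℝ)
    (hp : ∀ i, p i = (Pp (Q ⁻¹' I i)).toReal)
    (hpb : ∀ i, pb i = (Pp (A ∩ Q ⁻¹' I i)).toReal) :
    ∫ ω, ∑ i : Fin M,
        ((∑ j, Set.indicator (A ∩ Q ⁻¹' I i) (fun _ => (1 : ℝ)) (X j ω)) /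
          (∑ j, Set.indicator (Q ⁻¹' I i) (fun _ => (1 : ℝ)) (X j ω))) *
        ((1 / (K : ℝ)) * ∑ k, Set.indicator (I i) (fun _ => (1 : ℝ)) (Y k ω)) ∂P
      = ∑ i : Fin M, (pb i / p i) * (1 - (1 - p i) ^ N) * (PD (I i)).toReal := by
  set ratio : Fin M → (Fin N → Λ) → ℝ := fun i x =>
    sampleCount (A ∩ Q ⁻¹' I i) x / sampleCount (Q ⁻¹' I i) x
  set freq : Fin M → (Fin K → D) → ℝ := fun i y => 1 / (K : ℝ) * sampleCount (I i) y
  have hQI : ∀ i, MeasurableSet (Q ⁻¹' I i) := fun i => hQ (hImeas i)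
  have hAQI : ∀ i, MeasurableSet (A ∩ Q ⁻¹' I i) := fun i => hA.inter (hQI i)
  have hratio : ∀ i, Measurable (ratio i) := fun i =>
    (measurable_sampleCount (hAQI i)).div (measurable_sampleCount (hQI i))
  have hfreq : ∀ i, Measurable (freq i) := fun i => (measurable_sampleCount (hImeas i)).const_mul _
  have hindep : ∀ i, IndepFun (fun ω => ratio i (X · ω)) (fun ω => freq i (Y · ω)) P := fun i =>
    hXY.comp (hratio i) (hfreq i)
  have hratio_int : ∀ i, Integrable (fun ω => ratio i (X · ω)) P := fun i =>
    integrable_sampleCount_div_sampleCount hXmeas (hAQI i) (hQI i) Set.inter_subset_right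
  have hfreq_int : ∀ i, Integrable (fun ω => freq i (Y · ω)) P := fun i =>
    (integrable_sampleCount hYmeas (hImeas i)).const_mul _
  have hint : ∀ i, Integrable (fun ω => ratio i (X · ω) * freq i (Y · ω)) P := fun i =>
    (hindep i).integrable_mul (hratio_int i) (hfreq_int i)
  change ∫ ω, ∑ i, ratio i (X · ω) * freq i (Y · ω) ∂P = _
  rw [integral_finsetSum _ fun i _ => hint i]
  refine sum_congr rfl fun i _ => ?_
  rw [(hindep i).integral_fun_mul_eq_mul_integral (hratio_int i).aestronglyMeasurable
      (hfreq_int i).aestronglyMeasurable,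
    integral_sampleCount_div_sampleCount hXmeas hXindep hXlaw (hAQI i) (hQI i)
      Set.inter_subset_right,
    integral_const_mul, integral_sampleCount hYmeas hYlaw (hImeas i), hp, hpb]
  simp only [Fintype.card_fin, measureReal_def]
  field_simp

theorem stmt_16 {Ω Λ D : Type*} [MeasurableSpace Ω] [MeasurableSpace Λ] [MeasurableSpace D]
    (P : Measure Ω) [IsProbabilityMeasure P]
    (Pp : Measure Λ) [IsProbabilityMeasure Pp]
    (PD : Measure D) [IsProbabilityMeasure PD]
    (Q : Λ → D) (hQ : Measurable Q)
    (A : Set Λ) (hA : MeasurableSet A)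
    (M N K : ℕ) (hN : 0 < N) (hK : 0 < K)
    (I : Fin M → Set D) (hImeas : ∀ i, MeasurableSet (I i))
    (hIdisj : Pairwise (Function.onFun Disjoint I))
    (hIcover : (⋃ i, I i) = Set.univ)
    (X : Fin N → Ω → Λ) (hXmeas : ∀ j, Measurable (X j))
    (Y : Fin K → Ω → D) (hYmeas : ∀ k, Measurable (Y k))
    (hXindep : iIndepFun X P)
    (hYindep : iIndepFun Y P)
    (hXlaw : ∀ j, Measure.map (X j) P = Pp)
    (hYlaw : ∀ k, Measure.map (Y k) P = PD)
    (hXY : IndepFun (fun ω (j : Fin N) => X j ω) (fun ω (k : Fin K) => Y k ω) P)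
    (p pb : Fin M → ℝ)
    (hp : ∀ i, p i = (Pp (Q ⁻¹' I i)).toReal)
    (hpb : ∀ i, pb i = (Pp (A ∩ Q ⁻¹' I i)).toReal)
    (hppos : ∀ i, 0 < p i) :
    ∫ ω, ∑ i : Fin M,
        ((∑ j, Set.indicator (A ∩ Q ⁻¹' I i) (fun _ => (1 : ℝ)) (X j ω)) /
          (∑ j, Set.indicator (Q ⁻¹' I i) (fun _ => (1 : ℝ)) (X j ω))) *
        ((1 / (K : ℝ)) * ∑ k, Set.indicator (I i) (fun _ => (1 : ℝ)) (Y k ω)) ∂P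
      = ∑ i : Fin M, (pb i / p i) * (1 - (1 - p i) ^ N) * (PD (I i)).toReal :=
  stmt_16_general P Pp PD Q hQ A hA M N K hK I hImeas X hXmeas Y hYmeas hXindep hXlaw hYlaw hXY p pb
    hp hpb
end
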